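/- Let P ⊆ ℝ^d be a full-dimensional lattice polytope with codegree a satisfying P = ⌊aP⌋ + {P}. Then the remainder polytope {aP} = conv({x ∈ ℤ^d : n_F(x) ≥ −1 for all facets F of P}) of the dilate aP is a reflexive polytope. -/

import Mathlib

open Set Pointwise

/-- The set of lattice points of `ℝ^d`. -/
def latticePoints (d : ℕ) : Set (Fin d → ℝ) :=
  {x | ∀ i, ∃ z : ℤ, x i = (z : ℝ)}

/-- A lattice polytope: the convex hull of a finite set of lattice points. -/
def IsLatticePolytope {d : ℕ} (P : Set (Fin d → ℝ)) : Prop :=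
  ∃ V : Finset (Fin d → ℝ), (V : Set (Fin d → ℝ)) ⊆ latticePoints d ∧
    P = convexHull ℝ (V : Set (Fin d → ℝ))

/-- The natural pairing of an integral linear functional with a point of `ℝ^d`. -/
def pairing {d : ℕ} (n : Fin d → ℤ) (x : Fin d → ℝ) : ℝ :=
  ∑ i, (n i : ℝ) * x i

/-- `P = {x | n_F(x) ≥ -h_F}` is an irredundant presentation with primitive
integral inner normals, i.e. the facet presentation of `P`. -/
def IsFacetPresentation {d m : ℕ} (P : Set (Fin d → ℝ))
    (n : Fin m → Fin d → ℤ) (h : Fin m → ℤ) : Prop :=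
  P = {x | ∀ i, pairing (n i) x ≥ -(h i : ℝ)} ∧
  (∀ i, Finset.univ.gcd (n i) = 1) ∧
  (∀ i, ∃ x : Fin d → ℝ, pairing (n i) x < -(h i : ℝ) ∧
    ∀ j, j ≠ i → pairing (n j) x ≥ -(h j : ℝ))

/-- `a` is the codegree of `P`: the least `k ≥ 1` such that `int(kP)` contains
a lattice point. -/
def IsCodegree {d : ℕ} (P : Set (Fin d → ℝ)) (a : ℕ) : Prop :=
  1 ≤ a ∧ (interior ((a : ℝ) • P) ∩ latticePoints d).Nonempty ∧
    ∀ k : ℕ, 1 ≤ k → (interior ((k : ℝ) • P) ∩ latticePoints d).Nonempty → a ≤ k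

/-- The floor polytope `⌊R⌋ = conv(int(R) ∩ ℤ^d)`. -/
def floorPoly {d : ℕ} (R : Set (Fin d → ℝ)) : Set (Fin d → ℝ) :=
  convexHull ℝ (interior R ∩ latticePoints d)

/-- The remainder polytope `{P} = conv{x ∈ ℤ^d | n_F(x) ≥ (a-1)h_F - 1}`,
defined in terms of the facet presentation data and the codegree `a`. -/
def remPoly {d m : ℕ} (n : Fin m → Fin d → ℤ) (h : Fin m → ℤ) (a : ℕ) :
    Set (Fin d → ℝ) :=
  convexHull ℝ {x | x ∈ latticePoints d ∧
    ∀ i, pairing (n i) x ≥ ((a : ℝ) - 1) * (h i : ℝ) - 1}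

/-- The cone `C_P ⊆ ℝ^d × ℝ` over `P`, in terms of the facet presentation. -/
def coneOver {d m : ℕ} (n : Fin m → Fin d → ℤ) (h : Fin m → ℤ) :
    Set ((Fin d → ℝ) × ℝ) :=
  {p | ∀ i, pairing (n i) p.1 ≥ -(p.2 * (h i : ℝ))}

/-- The interior `int(C_P)` of the cone over `P`. -/
def intCone {d m : ℕ} (n : Fin m → Fin d → ℤ) (h : Fin m → ℤ) :
    Set ((Fin d → ℝ) × ℝ) :=
  {p | ∀ i, pairing (n i) p.1 > -(p.2 * (h i : ℝ))}

/-- The anticanonical set `ant(C_P)` of the cone over `P`. -/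
def antCone {d m : ℕ} (n : Fin m → Fin d → ℤ) (h : Fin m → ℤ) :
    Set ((Fin d → ℝ) × ℝ) :=
  {p | ∀ i, pairing (n i) p.1 ≥ -(p.2 * (h i : ℝ)) - 1}

/-- Lattice points of `ℝ^d × ℝ = ℝ^{d+1}`. -/
def latticePairs (d : ℕ) : Set ((Fin d → ℝ) × ℝ) :=
  {p | p.1 ∈ latticePoints d ∧ ∃ z : ℤ, p.2 = (z : ℝ)}

/-- The nearly Gorenstein condition with respect to a given facet presentation:
`(C_P ∩ ℤ^{d+1}) \ {0} ⊆ (int(C_P) ∩ ℤ^{d+1}) + (ant(C_P) ∩ ℤ^{d+1})`. -/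
def NGIncl {d m : ℕ} (n : Fin m → Fin d → ℤ) (h : Fin m → ℤ) : Prop :=
  (coneOver n h ∩ latticePairs d) \ {(0 : (Fin d → ℝ) × ℝ)} ⊆
    (intCone n h ∩ latticePairs d) + (antCone n h ∩ latticePairs d)

/-- A full-dimensional lattice polytope is nearly Gorenstein if the nearly
Gorenstein inclusion holds for its facet presentation. -/
def NearlyGorenstein {d : ℕ} (P : Set (Fin d → ℝ)) : Prop :=
  ∃ (m : ℕ) (n : Fin m → Fin d → ℤ) (h : Fin m → ℤ),
    IsFacetPresentation P n h ∧ NGIncl n h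

/-- The polar dual `Q* = {y | y(x) ≥ -1 for all x ∈ Q}`. -/
def polarDual {d : ℕ} (Q : Set (Fin d → ℝ)) : Set (Fin d → ℝ) :=
  {y | ∀ x ∈ Q, (∑ i, y i * x i) ≥ -1}

/-- A reflexive polytope: a lattice polytope with `0` in its interior whose
polar dual is again a lattice polytope. -/
def IsReflexive {d : ℕ} (Q : Set (Fin d → ℝ)) : Prop :=
  IsLatticePolytope Q ∧ (0 : Fin d → ℝ) ∈ interior Q ∧
    IsLatticePolytope (polarDual Q)

/-- A Gorenstein polytope: some dilate `kP`, translated by a lattice vector,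
is reflexive. -/
def IsGorenstein {d : ℕ} (P : Set (Fin d → ℝ)) : Prop :=
  ∃ (k : ℕ) (w : Fin d → ℝ), 1 ≤ k ∧ w ∈ latticePoints d ∧
    IsReflexive ((fun x => x - w) '' ((k : ℝ) • P))

/-- The integer decomposition property. -/
def IsIDP {d : ℕ} (P : Set (Fin d → ℝ)) : Prop :=
  ∀ k : ℕ, 1 ≤ k → ∀ x ∈ ((k : ℝ) • P) ∩ latticePoints d,
    ∃ y : Fin k → Fin d → ℝ, (∀ j, y j ∈ P ∩ latticePoints d) ∧ x = ∑ j, y j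

/-- Minkowski indecomposability of a lattice polytope. -/
def IsIndecomposable {d : ℕ} (P : Set (Fin d → ℝ)) : Prop :=
  (¬ ∃ p : Fin d → ℝ, P = {p}) ∧
  ∀ P₁ P₂ : Set (Fin d → ℝ), IsLatticePolytope P₁ → IsLatticePolytope P₂ →
    P = P₁ + P₂ → (∃ p, P₁ = {p}) ∨ (∃ p, P₂ = {p})

/-- A `(0,1)`-polytope: the convex hull of a set of `(0,1)`-vectors. -/
def Is01Polytope {d : ℕ} (P : Set (Fin d → ℝ)) : Prop :=
  ∃ V : Finset (Fin d → ℝ), (∀ v ∈ V, ∀ i, v i = 0 ∨ v i = 1) ∧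
    P = convexHull ℝ (V : Set (Fin d → ℝ))

/-! Write `B = {x | n_F(x) ≥ -1}`. Lattice points of `int(aP)` satisfy `n_F ≥ 1 - a h_F`, so
`B + ⌊aP⌋ ⊆ aP = ((a - 1)⌊aP⌋ + a{P}) + ⌊aP⌋`, and cancelling the compact summand `⌊aP⌋`
(Rådström) gives `B ⊆ (a - 1)⌊aP⌋ + a{P}`. The right-hand side is the convex hull of finitely many
lattice points of `B`, so `B = {aP}` is a lattice polytope with `0` in its interior, and its polar
dual is `conv(0, n_F)`, again a lattice polytope. -/

section Lattice

variable {d : ℕ}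

theorem latticePoints_eq_span :
    latticePoints d = Submodule.span ℤ (range (Pi.basisFun ℝ (Fin d))) := by
  ext x
  simp [Module.Basis.mem_span_iff_repr_mem, latticePoints, eq_comm]

theorem Bornology.IsBounded.finite_of_subset_latticePoints {s : Set (Fin d → ℝ)}
    (hb : Bornology.IsBounded s) (hs : s ⊆ latticePoints d) : s.Finite :=
  (ZSpan.setFinite_inter (Pi.basisFun ℝ (Fin d)) hb).subset fun _ hx =>
    ⟨hx, latticePoints_eq_span ▸ hs hx⟩

theorem add_mem_latticePoints {x y : Fin d → ℝ} (hx : x ∈ latticePoints d)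
    (hy : y ∈ latticePoints d) : x + y ∈ latticePoints d := by
  rw [latticePoints_eq_span] at *
  exact add_mem hx hy

theorem intCast_smul_mem_latticePoints (k : ℤ) {x : Fin d → ℝ} (hx : x ∈ latticePoints d) :
    (k : ℝ) • x ∈ latticePoints d := by
  rw [latticePoints_eq_span, Int.cast_smul_eq_zsmul] at *
  exact zsmul_mem hx k

theorem exists_intCast_eq_pairing {n : Fin d → ℤ} {x : Fin d → ℝ}
    (hx : x ∈ latticePoints d) : ∃ M : ℤ, pairing n x = M := by
  choose z hz using hx
  exact ⟨∑ i, n i * z i, by simp [pairing, hz]⟩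

theorem IsLatticePolytope.isCompact {P : Set (Fin d → ℝ)} (hP : IsLatticePolytope P) :
    IsCompact P := by
  obtain ⟨V, -, rfl⟩ := hP
  exact V.finite_toSet.isCompact_convexHull (𝕜 := ℝ)

end Lattice

section Polyhedron

variable {d : ℕ} {ι : Type*}

noncomputable def pairingCLM (n : Fin d → ℤ) : StrongDual ℝ (Fin d → ℝ) :=
  LinearMap.toContinuousLinearMap
    { toFun := pairing n
      map_add' := fun x y => by simp [pairing, mul_add, Finset.sum_add_distrib]
      map_smul' := fun c x => by
        simp [pairing, Finset.mul_sum, mul_left_comm] }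

@[simp]
theorem pairingCLM_apply (n : Fin d → ℤ) (x : Fin d → ℝ) : pairingCLM n x = pairing n x := rfl

theorem pairingCLM_surjective {n : Fin d → ℤ} (hn : n ≠ 0) :
    Function.Surjective (pairingCLM n) := by
  obtain ⟨j, hj⟩ := Function.ne_iff.mp hn
  refine fun t => ⟨(t / n j) • Pi.single j 1, ?_⟩
  have hj : (n j : ℝ) ≠ 0 := by exact_mod_cast hj
  simp [pairing, Pi.single_apply, hj]

def polyhedron (n : ι → Fin d → ℤ) (b : ι → ℝ) : Set (Fin d → ℝ) :=
  {x | ∀ i, b i ≤ pairing (n i) x}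

variable {n : ι → Fin d → ℤ} {b c : ι → ℝ}

theorem convex_polyhedron : Convex ℝ (polyhedron n b) := by
  simp only [polyhedron, ofPred_forall]
  exact convex_iInter fun i => convex_halfSpace_ge (pairingCLM (n i)).isLinear _

theorem polyhedron_mono (hbc : b ≤ c) : polyhedron n c ⊆ polyhedron n b :=
  fun _ hx i => (hbc i).trans (hx i)

theorem add_mem_polyhedron {x y : Fin d → ℝ} (hx : x ∈ polyhedron n b)
    (hy : y ∈ polyhedron n c) : x + y ∈ polyhedron n (b + c) := fun i => by
  simpa [← pairingCLM_apply] using add_le_add (hx i) (hy i)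

theorem smul_mem_polyhedron {t : ℝ} (ht : 0 ≤ t) {x : Fin d → ℝ} (hx : x ∈ polyhedron n b) :
    t • x ∈ polyhedron n (t • b) := fun i => by
  simpa [← pairingCLM_apply] using mul_le_mul_of_nonneg_left (hx i) ht

theorem smul_polyhedron {t : ℝ} (ht : 0 < t) : t • polyhedron n b = polyhedron n (t • b) := by
  refine (smul_set_subset_iff.mpr fun x hx => smul_mem_polyhedron ht.le hx).antisymm
    fun x hx => ⟨t⁻¹ • x, ?_, smul_inv_smul₀ ht.ne' x⟩
  simpa [smul_smul, inv_mul_cancel₀ ht.ne'] using smul_mem_polyhedron (inv_nonneg.mpr ht.le) hx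

theorem interior_polyhedron_inter_latticePoints_subset (hn : ∀ i, n i ≠ 0) (b : ι → ℤ) :
    interior (polyhedron n (fun i => b i)) ∩ latticePoints d ⊆
      polyhedron n (fun i => (b i : ℝ) + 1) := by
  rintro x ⟨hx, hxℤ⟩ i
  have hlt : (b i : ℝ) < pairing (n i) x := by
    have hsub : polyhedron n (fun i => b i) ⊆ pairingCLM (n i) ⁻¹' Ici (b i : ℝ) :=
      fun y hy => hy i
    have := interior_mono hsub hx
    rwa [ContinuousLinearMap.interior_preimage _ (pairingCLM_surjective (hn i)),
      interior_Ici] at this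
  obtain ⟨M, hM⟩ := exists_intCast_eq_pairing (n := n i) hxℤ
  show (b i : ℝ) + 1 ≤ pairing (n i) x
  rw [hM] at hlt ⊢
  exact_mod_cast Int.add_one_le_iff.mpr (by exact_mod_cast hlt : b i < M)

theorem zero_mem_interior_polyhedron [Finite ι] (hb : ∀ i, b i < 0) :
    (0 : Fin d → ℝ) ∈ interior (polyhedron n b) := by
  have hopen : IsOpen (⋂ i, pairingCLM (n i) ⁻¹' Ioi (b i)) :=
    isOpen_iInter_of_finite fun i => isOpen_Ioi.preimage (pairingCLM (n i)).continuous
  refine mem_interior.mpr ⟨⋂ i, pairingCLM (n i) ⁻¹' Ioi (b i),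
    fun x hx i => (mem_iInter.mp hx i).le, hopen, ?_⟩
  simpa only [mem_iInter, mem_preimage, map_zero, mem_Ioi] using hb

end Polyhedron

theorem subset_of_add_subset_add_of_isCompact {E : Type*} [AddCommGroup E] [Module ℝ E]
    [TopologicalSpace E] [IsTopologicalAddGroup E] [ContinuousSMul ℝ E]
    [LocallyConvexSpace ℝ E] {X K L : Set E} (hK : IsCompact K) (hKne : K.Nonempty)
    (hL : Convex ℝ L) (hLc : IsClosed L) (h : X + K ⊆ L + K) : X ⊆ L := by
  intro x hx
  by_contra hxL
  obtain ⟨f, u, hfL, hfx⟩ := geometric_hahn_banach_closed_point hL hLc hxL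
  obtain ⟨z, hzK, hzmax⟩ := hK.exists_isMaxOn hKne f.continuous.continuousOn
  obtain ⟨l, hl, k, hk, hlk : l + k = x + z⟩ := h (add_mem_add hx hzK)
  have hf : f l + f k = f x + f z := by rw [← map_add, ← map_add, hlk]
  linarith [hfL l hl, isMaxOn_iff.mp hzmax k hk]

section Polar

variable {d : ℕ}

theorem convex_polarDual (Q : Set (Fin d → ℝ)) : Convex ℝ (polarDual Q) := by
  have hlin (x : Fin d → ℝ) : IsLinearMap ℝ fun y : Fin d → ℝ => ∑ i, y i * x i :=
    ⟨fun y z => by simp [add_mul, Finset.sum_add_distrib],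
      fun c y => by simp [Finset.mul_sum, mul_assoc]⟩
  simp only [polarDual, ge_iff_le, ofPred_forall]
  exact convex_iInter fun x => convex_iInter fun _ => convex_halfSpace_ge (hlin x) (-1)

variable {ι : Type*}

theorem polarDual_polyhedron_neg_one [Finite ι] (n : ι → Fin d → ℤ) :
    polarDual (polyhedron n fun _ => -1) =
      convexHull ℝ (insert 0 (range fun i j => (n i j : ℝ))) := by
  refine Subset.antisymm (fun y hy => ?_) (convexHull_min ?_ (convex_polarDual _))
  · by_contra hyD
    obtain ⟨f, u, hfD, hfy⟩ := geometric_hahn_banach_closed_point (convex_convexHull ℝ _)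
      (((finite_range _).insert 0).isCompact_convexHull (𝕜 := ℝ)).isClosed hyD
    have hu : 0 < u := by simpa using hfD 0 (subset_convexHull ℝ _ (mem_insert _ _))
    -- `f` read as a point of `ℝ^d` and rescaled so that `f < u` on the `n_i` becomes `n_i ≥ -1`
    have hf (v : Fin d → ℝ) : ∑ j, v j * (-f (Pi.single j 1) / u) = -f v / u := by
      have hsingle (j : Fin d) : (fun k => if j = k then (1 : ℝ) else 0) = Pi.single j 1 := by
        ext k; simp [Pi.single_apply, eq_comm]
      have := LinearMap.pi_apply_eq_sum_univ (f : (Fin d → ℝ) →ₗ[ℝ] ℝ) v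
      simp only [ContinuousLinearMap.coe_coe, smul_eq_mul, hsingle] at this
      rw [this, ← Finset.sum_neg_distrib, Finset.sum_div]
      exact Finset.sum_congr rfl fun j _ => by ring
    have hx : (fun j => -f (Pi.single j 1) / u) ∈ polyhedron n fun _ => -1 := fun i => by
      have := hfD _ (subset_convexHull ℝ _ (mem_insert_of_mem _ ⟨i, rfl⟩))
      rw [pairing, hf, le_div_iff₀ hu]
      linarith
    have := hy _ hx
    rw [hf, ge_iff_le, le_div_iff₀ hu] at this
    linarith
  · rintro _ (rfl | ⟨i, rfl⟩) x hx
    · simp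
    · exact hx i

end Polar

section Reflexive

variable {d : ℕ} {ι : Type*}

theorem isReflexive_convexHull_latticePoints_inter_polyhedron [Finite ι]
    {n : ι → Fin d → ℤ} {T : Set (Fin d → ℝ)} (hT : T.Finite)
    (hTB : T ⊆ latticePoints d ∩ polyhedron n fun _ => -1)
    (hBT : polyhedron n (fun _ => -1) ⊆ convexHull ℝ T) :
    IsReflexive (convexHull ℝ (latticePoints d ∩ polyhedron n fun _ => -1)) := by
  have hQB : convexHull ℝ (latticePoints d ∩ polyhedron n fun _ => -1) =
      polyhedron n fun _ => -1 :=
    (convex_polyhedron.convexHull_subset_iff.mpr inter_subset_right).antisymm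
      (hBT.trans (convexHull_mono hTB))
  have hBT' : polyhedron n (fun _ => -1) = convexHull ℝ T :=
    hBT.antisymm (convex_polyhedron.convexHull_subset_iff.mpr (hTB.trans inter_subset_right))
  rw [hQB]
  refine ⟨⟨hT.toFinset, ?_, ?_⟩, zero_mem_interior_polyhedron fun _ => neg_one_lt_zero, ?_⟩
  · simpa using hTB.trans inter_subset_left
  · rw [hBT', hT.coe_toFinset]
  · rw [polarDual_polyhedron_neg_one]
    refine ⟨((finite_range _).insert 0).toFinset, ?_, by rw [Finite.coe_toFinset]⟩
    rw [Finite.coe_toFinset]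
    rintro _ (rfl | ⟨i, rfl⟩) j
    exacts [⟨0, by simp⟩, ⟨n i j, rfl⟩]

end Reflexive

section CodegreeDecomposition

variable {d : ℕ} {ι : Type*} {P : Set (Fin d → ℝ)} {n : ι → Fin d → ℤ} {h : ι → ℤ} {a : ℕ}

theorem interior_smul_inter_latticePoints_subset (hPeq : P = polyhedron n fun i => -(h i : ℝ))
    (hn : ∀ i, n i ≠ 0) (ha : 0 < a) :
    interior ((a : ℝ) • P) ∩ latticePoints d ⊆ polyhedron n fun i => 1 - a * h i := by
  have hb : (a : ℝ) • (fun i => -(h i : ℝ)) = fun i => ((-(a * h i) : ℤ) : ℝ) := by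
    ext i; simp
  rw [hPeq, smul_polyhedron (by positivity), hb]
  refine (interior_polyhedron_inter_latticePoints_subset hn _).trans (polyhedron_mono ?_)
  intro i
  push_cast
  linarith

theorem floorPoly_smul_subset (hPeq : P = polyhedron n fun i => -(h i : ℝ))
    (hn : ∀ i, n i ≠ 0) (ha : 0 < a) :
    floorPoly ((a : ℝ) • P) ⊆ polyhedron n fun i => 1 - a * h i :=
  convex_polyhedron.convexHull_subset_iff.mpr (interior_smul_inter_latticePoints_subset hPeq hn ha)

theorem sub_one_smul_add_smul_subset_latticePoints_inter_polyhedron (hPeq : P = polyhedron n fun i => -(h i : ℝ))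
    (hn : ∀ i, n i ≠ 0) (ha : 1 ≤ a) :
    ((a : ℝ) - 1) • (interior ((a : ℝ) • P) ∩ latticePoints d) +
        (a : ℝ) • {x | x ∈ latticePoints d ∧
          ∀ i, pairing (n i) x ≥ ((a : ℝ) - 1) * (h i : ℝ) - 1} ⊆
      latticePoints d ∩ polyhedron n fun _ => -1 := by
  have ha' : (1 : ℝ) ≤ a := by exact_mod_cast ha
  rintro _ ⟨_, ⟨y, hy, rfl⟩, _, ⟨g, hg, rfl⟩, rfl⟩
  refine ⟨add_mem_latticePoints ?_ ?_, polyhedron_mono ?_ (add_mem_polyhedron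
    (smul_mem_polyhedron (by linarith) (interior_smul_inter_latticePoints_subset hPeq hn ha hy))
    (smul_mem_polyhedron (by linarith) (show g ∈ polyhedron n _ from hg.2)))⟩
  · simpa using intCast_smul_mem_latticePoints ((a : ℤ) - 1) hy.2
  · simpa using intCast_smul_mem_latticePoints a hg.1
  · intro i
    simp only [Pi.add_apply, Pi.smul_apply, smul_eq_mul]
    nlinarith

theorem polyhedron_neg_one_add_floorPoly_subset (hPeq : P = polyhedron n fun i => -(h i : ℝ))
    (hn : ∀ i, n i ≠ 0) (ha : 0 < a) :
    (polyhedron n fun _ => -1) + floorPoly ((a : ℝ) • P) ⊆ (a : ℝ) • P := by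
  rintro _ ⟨x, hx, z, hz, rfl⟩
  rw [hPeq, smul_polyhedron (by positivity)]
  refine polyhedron_mono (fun i => ?_) (add_mem_polyhedron hx (floorPoly_smul_subset hPeq hn ha hz))
  simp

end CodegreeDecomposition

theorem polyhedron_neg_one_subset_of_eq_floorPoly_add_remPoly {d m : ℕ} {P : Set (Fin d → ℝ)}
    {n : Fin m → Fin d → ℤ} {h : Fin m → ℤ} {a : ℕ}
    (hPeq : P = polyhedron n fun i => -(h i : ℝ)) (hn : ∀ i, n i ≠ 0) (ha : 1 ≤ a)
    (hdecomp : P = floorPoly ((a : ℝ) • P) + remPoly n h a)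
    (hF : (interior ((a : ℝ) • P) ∩ latticePoints d).Finite)
    (hFne : (interior ((a : ℝ) • P) ∩ latticePoints d).Nonempty)
    (hR : {x | x ∈ latticePoints d ∧
          ∀ i, pairing (n i) x ≥ ((a : ℝ) - 1) * (h i : ℝ) - 1}.Finite) :
    (polyhedron n fun _ => -1) ⊆
      ((a : ℝ) - 1) • floorPoly ((a : ℝ) • P) + (a : ℝ) • remPoly n h a := by
  set F := floorPoly ((a : ℝ) • P)
  set R := remPoly n h a
  have hFc : IsCompact F := hF.isCompact_convexHull (𝕜 := ℝ)
  have hRc : IsCompact R := hR.isCompact_convexHull (𝕜 := ℝ)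
  have hFconv : Convex ℝ F := convex_convexHull ℝ _
  have ha' : (1 : ℝ) ≤ a := by exact_mod_cast ha
  refine subset_of_add_subset_add_of_isCompact hFc (hFne.mono (subset_convexHull ℝ _))
    ((hFconv.smul _).add ((convex_convexHull ℝ _).smul _))
    ((hFc.smul _).add (hRc.smul _)).isClosed ?_
  calc (polyhedron n fun _ => -1) + F ⊆ (a : ℝ) • P :=
        polyhedron_neg_one_add_floorPoly_subset hPeq hn ha
    _ = ((a : ℝ) - 1) • F + (a : ℝ) • R + F := by
      have hsplit : (a : ℝ) • F = ((a : ℝ) - 1) • F + F := by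
        simpa using hFconv.add_smul (sub_nonneg.mpr ha') zero_le_one
      conv_lhs => rw [hdecomp]
      rw [smul_add, hsplit, add_right_comm]

theorem stmt_10_general {d : ℕ} (P : Set (Fin d → ℝ))
    (hP : IsLatticePolytope P)
    {m : ℕ} (n : Fin m → Fin d → ℤ) (h : Fin m → ℤ)
    (hpres : IsFacetPresentation P n h)
    (a : ℕ) (ha : IsCodegree P a)
    (hdecomp : P = floorPoly ((a : ℝ) • P) + remPoly n h a) :
    IsReflexive
      (convexHull ℝ {x | x ∈ latticePoints d ∧ ∀ i, pairing (n i) x ≥ -1}) := by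
  obtain ⟨hPeq, hprim, -⟩ := hpres
  obtain ⟨ha, ⟨y₀, hy₀⟩, -⟩ := ha
  have hn (i : Fin m) : n i ≠ 0 := fun h0 => by
    simpa [h0, Finset.gcd_eq_zero_iff.mpr] using hprim i
  have hA : (interior ((a : ℝ) • P) ∩ latticePoints d).Finite :=
    ((hP.isCompact.isBounded.smul₀ _).subset fun x hx => interior_subset hx.1
      ).finite_of_subset_latticePoints inter_subset_right
  have hG : {x | x ∈ latticePoints d ∧
      ∀ i, pairing (n i) x ≥ ((a : ℝ) - 1) * (h i : ℝ) - 1}.Finite := by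
    refine Bornology.IsBounded.finite_of_subset_latticePoints ?_ fun x hx => hx.1
    refine (hP.isCompact.image (continuous_sub_right y₀)).isBounded.subset fun g hg =>
      ⟨y₀ + g, ?_, add_sub_cancel_left _ _⟩
    rw [hdecomp]
    exact add_mem_add (subset_convexHull ℝ _ hy₀) (subset_convexHull ℝ _ hg)
  refine isReflexive_convexHull_latticePoints_inter_polyhedron (hA.smul_set.add hG.smul_set)
    (sub_one_smul_add_smul_subset_latticePoints_inter_polyhedron hPeq hn ha) ?_
  rw [convexHull_add, convexHull_smul, convexHull_smul]
  exact polyhedron_neg_one_subset_of_eq_floorPoly_add_remPoly hPeq hn ha hdecomp hA ⟨y₀, hy₀⟩ hG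

theorem stmt_10 {d : ℕ} (hd : 1 ≤ d) (P : Set (Fin d → ℝ))
    (hP : IsLatticePolytope P) (hfull : (interior P).Nonempty)
    {m : ℕ} (n : Fin m → Fin d → ℤ) (h : Fin m → ℤ)
    (hpres : IsFacetPresentation P n h)
    (a : ℕ) (ha : IsCodegree P a)
    (hdecomp : P = floorPoly ((a : ℝ) • P) + remPoly n h a) :
    IsReflexive
      (convexHull ℝ {x | x ∈ latticePoints d ∧ ∀ i, pairing (n i) x ≥ -1}) :=
  stmt_10_general P hP n h hpres a ha hdecomp
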